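/- Let p > 3 be a prime, n, k integers coprime to p, χ a non-principal Dirichlet character mod p, and χ_L the Legendre symbol character. Then ∑_{m=1}^{p-1} χ_L(m)·|∑_{a=1}^{p-1} χ(m·a + n·ā)·e(k·a/p)|² = (χ_L(n·k²)·τ(χ_L)²/p)·(-(p-1) - ∑_{u=1}^{p-1} χ̄(u)·∑_{a=2}^{p-1} ((u·a-1)(u·ā-1) | p)). -/

import Mathlib

/-!
Write `T(m) = ∑_a χ(ma + nā) e(ka/p)`. Expanding `|T(m)|²`, putting `a = bc` and then
`m = n b⁻² v`, the sum over `m` becomes `(n|p) G(c)` with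
`G(c) = ∑_v (v|p) χ̄((v+1)/(vc+c⁻¹))`, while the sum over `b ≠ 0` of `e(kb(c-1)/p)` is
`p [c = 1] - 1`; so the moment equals `(n|p) (p G(1) - ∑_c G(c))`.

For `c ≠ 0, ±1`, `v ↦ (v+1)/(vc+c⁻¹)` is a Möbius transformation, and inverting it shows
`G(c) = (-1|p) W(c)` with `W(c) = ∑_u χ̄(u) ((uc-1)(uc⁻¹-1)|p)`. This identity also holds for
`c = 0`, where both sides vanish (with `0⁻¹ = 0`), and for `c = ±1`, where both sides are
computed by orthogonality. Then `W(0) = 0`, `W(1) = -1`, and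
`τ(χ_L)² = (-1|p) p` give the formula.
-/

open Finset Complex

/-- `e p x = e^{2πi x/p}` for `x : ZMod p`. -/
noncomputable def e (p : ℕ) [NeZero p] (x : ZMod p) : ℂ :=
  Complex.exp (2 * Real.pi * Complex.I * x.val / p)

/-- Gauss sum `τ(f) = ∑_{a mod p} f(a) e^{2πia/p}` associated to `f : ZMod p → ℂ`. -/
noncomputable def gaussSum' (p : ℕ) [NeZero p] (f : ZMod p → ℂ) : ℂ :=
  ∑ a : ZMod p, f a * e p a

/-- The Legendre symbol character mod `p`, with complex values. -/
noncomputable def legChar (p : ℕ) [Fact p.Prime] : DirichletCharacter ℂ p :=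
  (quadraticChar (ZMod p)).ringHomComp (Int.castRingHom ℂ)

open ComplexConjugate

section CharSums

variable {F R : Type*} [Field F] [CommRing R]

lemma MulChar.IsQuadratic.apply_mul_self {L : MulChar F R} (hL : L.IsQuadratic) {x : F}
    (hx : x ≠ 0) : L (x * x) = 1 := by
  rw [map_mul, ← sq, ← MulChar.pow_apply' _ two_ne_zero, hL.sq_eq_one,
    MulChar.one_apply hx.isUnit]

lemma MulChar.IsQuadratic.apply_div {L : MulChar F R} (hL : L.IsQuadratic) (x y : F) :
    L (x / y) = L x * L y := by
  rw [div_eq_mul_inv, map_mul, ← MulChar.inv_apply', hL.inv]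

lemma div_eq_iff_of_mul_self_ne_one {c u v : F} (hc : c ≠ 0) (hc1 : c * c ≠ 1) (hu : u ≠ 0) :
    (v + 1) / (v * c + c⁻¹) = u ↔ v * (1 - u * c) = u * c⁻¹ - 1 := by
  constructor
  · intro h
    have hD : v * c + c⁻¹ ≠ 0 := fun hD => hu (by rw [← h, hD, div_zero])
    rw [div_eq_iff hD] at h
    linear_combination h
  · intro h
    have hD : v * c + c⁻¹ ≠ 0 := by
      intro hD
      have hv : v = -1 := by linear_combination h + u * hD
      rw [hv] at hD
      field_simp at hD
      exact hc1 (by linear_combination -hD)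
    rw [div_eq_iff hD]
    linear_combination h

variable [Fintype F]

noncomputable def mobiusCharSum (L ζ : MulChar F R) (c : F) : R :=
  ∑ v, L v * ζ ((v + 1) / (v * c + c⁻¹))

noncomputable def quadCharSum (L ζ : MulChar F R) (c : F) : R :=
  ∑ u, ζ u * L ((u * c - 1) * (u * c⁻¹ - 1))

lemma sum_mul_apply_div_eq_mobiusCharSum {L : MulChar F R} (ζ : MulChar F R)
    (hL : L.IsQuadratic) {n b : F} (hn : n ≠ 0) (hb : b ≠ 0) (a : F) :
    ∑ m, L m * ζ ((m * b + n * b⁻¹) / (m * a + n * a⁻¹)) = L n * mobiusCharSum L ζ (a / b) := by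
  have hnb : n * b⁻¹ ≠ 0 := mul_ne_zero hn (inv_ne_zero hb)
  rw [mobiusCharSum, ← Equiv.sum_comp (Equiv.mulLeft₀ (n * (b⁻¹ * b⁻¹)) (by simp [hn, hb])),
    mul_sum]
  refine sum_congr rfl fun v _ => ?_
  have hnum : n * (b⁻¹ * b⁻¹) * v * b + n * b⁻¹ = n * b⁻¹ * (v + 1) := by
    field_simp
  have hden : n * (b⁻¹ * b⁻¹) * v * a + n * a⁻¹ = n * b⁻¹ * (v * (a / b) + (a / b)⁻¹) := by
    rw [inv_div]
    field_simp
  rw [Equiv.mulLeft₀_apply, hnum, hden, mul_div_mul_left _ _ hnb, map_mul, map_mul,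
    hL.apply_mul_self (inv_ne_zero hb)]
  ring

lemma quadCharSum_zero [IsDomain R] {L ζ : MulChar F R} (hζ : ζ ≠ 1) : quadCharSum L ζ 0 = 0 := by
  simp [quadCharSum, MulChar.sum_eq_zero_of_ne_one hζ]

variable [DecidableEq F]

lemma sum_filter_ne_zero_eq_sum {M : Type*} [AddCommMonoid M] {f : F → M} (h : f 0 = 0) :
    ∑ x ∈ univ.filter (· ≠ 0), f x = ∑ x, f x :=
  sum_filter_of_ne fun _ _ hx hx0 => hx (by rw [hx0, h])

lemma sum_filter_mul_eq {M : Type*} [AddCommMonoid M] {f : F → M} (hf : f 0 = 0) {α β : F}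
    (h : α = 0 → β ≠ 0) : ∑ v ∈ univ.filter (fun v => v * α = β), f v = f (β / α) := by
  by_cases hα : α = 0
  · rw [hα, div_zero, hf, sum_eq_zero]
    intro v hv
    exact absurd (by simpa [hα] using (mem_filter.mp hv).2.symm) (h hα)
  · simp_rw [← eq_div_iff hα, filter_eq', mem_univ, if_true, sum_singleton]

variable {L ζ : MulChar F R}

/-- The fibre of `v ↦ (v+1)/(vc+c⁻¹)` over `u ≠ 0` is the point `(uc⁻¹-1)/(1-uc)`, or empty
if `uc = 1`. -/
lemma mobiusCharSum_of_mul_self_ne_one [Nontrivial R] (hL : L.IsQuadratic) {c : F} (hc : c ≠ 0)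
    (hc1 : c * c ≠ 1) : mobiusCharSum L ζ c = L (-1) * quadCharSum L ζ c := by
  rw [mobiusCharSum, quadCharSum, mul_sum,
    ← sum_fiberwise univ (fun v => (v + 1) / (v * c + c⁻¹))]
  refine sum_congr rfl fun u _ => ?_
  rw [sum_congr rfl fun v hv => by rw [(mem_filter.mp hv).2], ← sum_mul]
  rcases eq_or_ne u 0 with rfl | hu
  · simp [MulChar.map_zero]
  have hβ : 1 - u * c = 0 → u * c⁻¹ - 1 ≠ 0 := by
    intro h h'
    rw [eq_inv_of_mul_eq_one_left (by linear_combination -h : u * c = 1)] at h'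
    field_simp at h'
    exact hc1 (by linear_combination -h')
  rw [filter_congr fun v _ => div_eq_iff_of_mul_self_ne_one hc hc1 hu,
    sum_filter_mul_eq (MulChar.map_zero L) hβ, hL.apply_div, ← map_mul,
    show (u * c⁻¹ - 1) * (1 - u * c) = -1 * ((u * c - 1) * (u * c⁻¹ - 1)) by ring, map_mul]
  ring

variable [IsDomain R]

lemma MulChar.sum_erase_eq_neg {φ : MulChar F R} (hφ : φ ≠ 1) (a : F) :
    ∑ x ∈ univ.erase a, φ x = -φ a := by
  rw [sum_erase_eq_sub (mem_univ a), MulChar.sum_eq_zero_of_ne_one hφ, zero_sub]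

lemma mobiusCharSum_of_mul_self_eq_one (hL1 : L ≠ 1) {c : F} (hc : c * c = 1) :
    mobiusCharSum L ζ c = -L (-1) * ζ c := by
  have hcinv : c⁻¹ = c := inv_eq_of_mul_eq_one_right hc
  rw [mobiusCharSum, ← sum_erase (a := -1) _ (by simp [MulChar.map_zero]),
    ← MulChar.sum_erase_eq_neg hL1, sum_mul]
  refine sum_congr rfl fun v hv => ?_
  have hv : v + 1 ≠ 0 := fun h => (mem_erase.mp hv).1 (eq_neg_of_add_eq_zero_left h)
  rw [hcinv, ← add_one_mul, div_mul_cancel_left₀ hv, hcinv]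

lemma quadCharSum_of_mul_self_eq_one (hL : L.IsQuadratic) (hζ : ζ ≠ 1) {c : F}
    (hc : c * c = 1) : quadCharSum L ζ c = -ζ c := by
  have hcinv : c⁻¹ = c := inv_eq_of_mul_eq_one_right hc
  rw [quadCharSum, ← sum_erase (a := c) _ (by simp [hcinv, hc, MulChar.map_zero]),
    ← MulChar.sum_erase_eq_neg hζ]
  refine sum_congr rfl fun u hu => ?_
  have hu : u * c - 1 ≠ 0 := fun h => (mem_erase.mp hu).1 <| by
    rw [← hcinv]; exact eq_inv_of_mul_eq_one_left (sub_eq_zero.mp h)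
  rw [hcinv, hL.apply_mul_self hu, mul_one]

lemma mobiusCharSum_eq (hL : L.IsQuadratic) (hL1 : L ≠ 1) (hζ : ζ ≠ 1) (c : F) :
    mobiusCharSum L ζ c = L (-1) * quadCharSum L ζ c := by
  rcases eq_or_ne c 0 with rfl | hc
  · simp [mobiusCharSum, quadCharSum_zero hζ, MulChar.map_zero]
  rcases eq_or_ne (c * c) 1 with hc1 | hc1
  · rw [mobiusCharSum_of_mul_self_eq_one hL1 hc1, quadCharSum_of_mul_self_eq_one hL hζ hc1]
    ring
  · exact mobiusCharSum_of_mul_self_ne_one hL hc hc1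

end CharSums

section Kloosterman

variable {F : Type*} [Field F] [Fintype F]

lemma MulChar.apply_mul_conj_apply (χ : MulChar F ℂ) (x y : F) :
    χ x * conj (χ y) = χ⁻¹ (y / x) := by
  rw [starRingEnd_apply, MulChar.star_apply', ← inv_inv x, ← MulChar.inv_apply', inv_inv,
    ← map_mul, div_eq_mul_inv, mul_comm]

noncomputable def charKloostermanSum (χ : MulChar F ℂ) (ψ : AddChar F ℂ) (m n k : F) : ℂ :=
  ∑ a, χ (m * a + n * a⁻¹) * ψ (k * a)

lemma charKloostermanSum_mul_conj (χ : MulChar F ℂ) (ψ : AddChar F ℂ) (m n k : F) :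
    charKloostermanSum χ ψ m n k * conj (charKloostermanSum χ ψ m n k) =
      ∑ b, ∑ a, χ⁻¹ ((m * b + n * b⁻¹) / (m * a + n * a⁻¹)) * ψ (k * (a - b)) := by
  rw [charKloostermanSum, map_sum, sum_mul_sum, sum_comm]
  refine sum_congr rfl fun b _ => sum_congr rfl fun a _ => ?_
  rw [map_mul (starRingEnd ℂ), ← AddChar.map_neg_eq_conj, mul_mul_mul_comm,
    MulChar.apply_mul_conj_apply, ← AddChar.map_add_eq_mul, mul_sub, sub_eq_add_neg]

variable [DecidableEq F]

lemma AddChar.sum_filter_ne_zero_mulShift {ψ : AddChar F ℂ} (hψ : ψ.IsPrimitive) (t : F) :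
    ∑ b ∈ univ.filter (· ≠ 0), ψ (b * t) = (if t = 0 then (Fintype.card F : ℂ) else 0) - 1 := by
  rw [filter_ne', sum_erase_eq_sub (mem_univ 0), AddChar.sum_mulShift t hψ, zero_mul,
    AddChar.map_zero_eq_one]
  split_ifs <;> simp

variable {χ L : MulChar F ℂ} {ψ : AddChar F ℂ} {n k : F}

lemma sum_mul_charKloostermanSum_mul_conj (hψ : ψ.IsPrimitive) (hL : L.IsQuadratic)
    (hn : n ≠ 0) (hk : k ≠ 0) :
    ∑ m, L m * (charKloostermanSum χ ψ m n k * conj (charKloostermanSum χ ψ m n k)) =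
      L n * (Fintype.card F * mobiusCharSum L χ⁻¹ 1 - ∑ c, mobiusCharSum L χ⁻¹ c) := by
  set G := mobiusCharSum L χ⁻¹
  calc ∑ m, L m * (charKloostermanSum χ ψ m n k * conj (charKloostermanSum χ ψ m n k))
      = ∑ b, ∑ a, (∑ m, L m * χ⁻¹ ((m * b + n * b⁻¹) / (m * a + n * a⁻¹))) *
          ψ (k * (a - b)) := by
        simp_rw [charKloostermanSum_mul_conj, mul_sum, sum_mul, ← mul_assoc]
        rw [sum_comm_cycle, sum_comm_cycle]
    _ = ∑ b ∈ univ.filter (· ≠ 0), ∑ a, L n * G (a / b) * ψ (k * (a - b)) := by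
        rw [← sum_filter_ne_zero_eq_sum (by simp [MulChar.map_zero])]
        refine sum_congr rfl fun b hb => sum_congr rfl fun a _ => ?_
        rw [sum_mul_apply_div_eq_mobiusCharSum χ⁻¹ hL hn (mem_filter.mp hb).2]
    _ = ∑ b ∈ univ.filter (· ≠ 0), ∑ c, L n * G c * ψ (b * (k * (c - 1))) := by
        refine sum_congr rfl fun b hb => ?_
        rw [← Equiv.sum_comp (Equiv.mulLeft₀ b (mem_filter.mp hb).2)]
        refine sum_congr rfl fun c _ => ?_
        rw [Equiv.mulLeft₀_apply, mul_div_cancel_left₀ _ (mem_filter.mp hb).2]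
        ring_nf
    _ = L n * ∑ c, G c * ((if c = 1 then (Fintype.card F : ℂ) else 0) - 1) := by
        rw [sum_comm, mul_sum]
        refine sum_congr rfl fun c _ => ?_
        rw [← mul_sum, AddChar.sum_filter_ne_zero_mulShift hψ, mul_assoc]
        simp only [mul_eq_zero, hk, false_or, sub_eq_zero]
    _ = L n * (Fintype.card F * G 1 - ∑ c, G c) := by
        simp [mul_sub, sum_sub_distrib, mul_ite, sum_ite_eq', mul_comm]

lemma sum_mul_charKloostermanSum_mul_conj_eq (hψ : ψ.IsPrimitive) (hL : L.IsQuadratic)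
    (hL1 : L ≠ 1) (hχ : χ ≠ 1) (hn : n ≠ 0) (hk : k ≠ 0) :
    ∑ m, L m * (charKloostermanSum χ ψ m n k * conj (charKloostermanSum χ ψ m n k)) =
      L n * L (-1) * (-(Fintype.card F - 1) -
        ∑ c ∈ univ.filter (fun c : F => c ≠ 0 ∧ c ≠ 1), quadCharSum L χ⁻¹ c) := by
  have hχ' : χ⁻¹ ≠ 1 := inv_ne_one.mpr hχ
  have hsplit : ∑ c, quadCharSum L χ⁻¹ c =
      ∑ c ∈ univ.filter (fun c : F => c ≠ 0 ∧ c ≠ 1), quadCharSum L χ⁻¹ c - 1 := by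
    rw [← sum_filter_add_sum_filter_not univ (fun c : F => c ≠ 0 ∧ c ≠ 1),
      show univ.filter (fun c : F => ¬(c ≠ 0 ∧ c ≠ 1)) = {0, 1} by
        ext; simp [or_iff_not_imp_left],
      sum_pair zero_ne_one, quadCharSum_zero hχ',
      quadCharSum_of_mul_self_eq_one hL hχ' (mul_one 1), map_one]
    ring
  simp_rw [sum_mul_charKloostermanSum_mul_conj hψ hL hn hk, mobiusCharSum_eq hL hL1 hχ',
    ← mul_sum, hsplit, quadCharSum_of_mul_self_eq_one hL hχ' (mul_one 1), map_one]
  ring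

end Kloosterman

section ZModP

variable {p : ℕ} [Fact p.Prime]

lemma e_eq_stdAddChar : e p = ZMod.stdAddChar := by
  funext x
  rw [e, ZMod.stdAddChar_apply, ZMod.toCircle_apply]

lemma legChar_isQuadratic : (legChar p).IsQuadratic :=
  (quadraticChar_isQuadratic (ZMod p)).comp _

lemma legChar_ne_one (hp : p ≠ 2) : legChar p ≠ 1 :=
  (MulChar.ringHomComp_ne_one_iff (RingHom.injective_int _)).mpr
    (quadraticChar_ne_one (by rwa [ZMod.ringChar_zmod_n]))

lemma gaussSum'_legChar_sq (hp : p ≠ 2) : gaussSum' p (legChar p) ^ 2 = legChar p (-1) * p :=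
  calc gaussSum' p (legChar p) ^ 2 = gaussSum (legChar p) ZMod.stdAddChar ^ 2 := by
        simp [gaussSum', gaussSum, e_eq_stdAddChar]
    _ = legChar p (-1) * Fintype.card (ZMod p) :=
        gaussSum_sq (legChar_ne_one hp) legChar_isQuadratic (ZMod.isPrimitive_stdAddChar p)
    _ = legChar p (-1) * p := by rw [ZMod.card]

lemma legendreSym_val_eq_legChar (x : ZMod p) : (legendreSym p x.val : ℂ) = legChar p x := by
  simp [legendreSym, legChar, MulChar.ringHomComp_apply]

lemma intCast_ne_zero_of_isCoprime {n : ℤ} (hn : IsCoprime n p) : (n : ZMod p) ≠ 0 := by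
  rw [Ne, ZMod.intCast_zmod_eq_zero_iff_dvd]
  intro h
  have hu := hn.isUnit_of_dvd' h dvd_rfl
  rw [Int.isUnit_iff_natAbs_eq, Int.natAbs_natCast] at hu
  exact (Fact.out : p.Prime).one_lt.ne' hu

end ZModP

theorem stmt_12 (p : ℕ) [Fact p.Prime] (hp : 3 < p) (n k : ℤ)
    (hn : IsCoprime n (p : ℤ)) (hk : IsCoprime k (p : ℤ))
    (χ : DirichletCharacter ℂ p) (hχ : χ ≠ 1) :
    ∑ m ∈ univ.filter (fun m : ZMod p => m ≠ 0),
      legChar p m * (‖∑ a ∈ univ.filter (fun a : ZMod p => a ≠ 0),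
        χ ((m : ZMod p) * a + (n : ZMod p) * a⁻¹) * e p ((k : ZMod p) * a)‖ : ℝ) ^ 2
      = legChar p ((n * k ^ 2 : ℤ) : ZMod p) * gaussSum' p (legChar p) ^ 2 / p
          * (-(p - 1) - ∑ u ∈ univ.filter (fun u : ZMod p => u ≠ 0),
              (starRingEnd ℂ) (χ u) *
                ∑ a ∈ univ.filter (fun a : ZMod p => a ≠ 0 ∧ a ≠ 1),
                  (legendreSym p (((u * a - 1) * (u * a⁻¹ - 1) : ZMod p).val : ℤ) : ℂ)) := by
  have hp2 : p ≠ 2 := by omega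
  have hkz := intCast_ne_zero_of_isCoprime hk
  have hT (m : ZMod p) : ∑ a ∈ univ.filter (· ≠ 0), χ (m * a + n * a⁻¹) * e p (k * a) =
      charKloostermanSum χ ZMod.stdAddChar m n k := by
    rw [sum_filter_ne_zero_eq_sum (by simp [MulChar.map_zero]), e_eq_stdAddChar,
      charKloostermanSum]
  have hW : ∑ u ∈ univ.filter (· ≠ 0), conj (χ u) *
        ∑ a ∈ univ.filter (fun a : ZMod p => a ≠ 0 ∧ a ≠ 1),
          (legendreSym p ((u * a - 1) * (u * a⁻¹ - 1) : ZMod p).val : ℂ) =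
      ∑ a ∈ univ.filter (fun a : ZMod p => a ≠ 0 ∧ a ≠ 1), quadCharSum (legChar p) χ⁻¹ a := by
    simp_rw [legendreSym_val_eq_legChar, mul_sum, quadCharSum, starRingEnd_apply,
      MulChar.star_apply']
    rw [sum_filter_ne_zero_eq_sum (by simp [MulChar.map_zero]), sum_comm]
  have hnk : legChar p ((n * k ^ 2 : ℤ) : ZMod p) = legChar p n := by
    rw [Int.cast_mul, Int.cast_pow, map_mul, sq]
    exact mul_right_eq_self₀.mpr (Or.inl (legChar_isQuadratic.apply_mul_self hkz))
  have hp0 : (p : ℂ) ≠ 0 := Nat.cast_ne_zero.mpr (Fact.out : p.Prime).ne_zero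
  simp_rw [hT, ← Complex.mul_conj']
  rw [hW, sum_filter_ne_zero_eq_sum (by simp [MulChar.map_zero]),
    sum_mul_charKloostermanSum_mul_conj_eq (ZMod.isPrimitive_stdAddChar p) legChar_isQuadratic
      (legChar_ne_one hp2) hχ (intCast_ne_zero_of_isCoprime hn) hkz,
    hnk, gaussSum'_legChar_sq hp2, ZMod.card]
  field_simp
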